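/- Let R be a commutative ring, n ≥ 2, and f, g₁, g₂, …, gₙ ∈ R. Assume that the sequence f, g₂, g₃, …, gₙ is a regular sequence on R. Let a = (a₁, a₂, …, aₙ) ∈ Rⁿ be a logarithmic vector, i.e., a₁g₁ + a₂g₂ + ⋯ + aₙgₙ ∈ (f). Then the following are equivalent: (i) a belongs to the trivial submodule T of Rⁿ generated by f·eᵢ (1 ≤ i ≤ n) and gⱼ·eᵢ − gᵢ·eⱼ (1 ≤ i < j ≤ n); (ii) a₁ belongs to the ideal (f, g₂, …, gₙ). -/

import Mathlib

/-!
The image of `T` under the `p`-th coordinate projection is exactly the ideal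
`(f, gᵢ : i ≠ p)`; this gives (i) ⇒ (ii). Conversely, if `aₚ` lies in that ideal, subtract
from `a` an element of `T` with the same `p`-th coordinate: what remains is a logarithmic
vector supported away from `p`, i.e. one for the shorter sequence `(gᵢ)_{i ≠ p}`. So it
suffices to know that every logarithmic vector for `f, x₁, …, xₘ` lies in `T` when this
sequence is weakly regular. By induction on `m`: since `xₘ` is regular modulo
`(f, x₁, …, xₘ₋₁)` and `xₘ aₘ ≡ -∑_{i<m} xᵢ aᵢ ≡ 0` there, `aₘ` lies in that ideal,
and the same elimination with `p = m` reduces the length.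
-/

open RingTheory.Sequence Matrix

section KoszulRelations

variable {R ι κ : Type*} [CommRing R]

lemma Function.ExtendByZero.linearMap_single [DecidableEq ι] [DecidableEq κ] {s : κ → ι}
    (hs : s.Injective) (i : κ) (r : R) :
    ExtendByZero.linearMap R s (Pi.single i r) = Pi.single (s i) r := by
  ext j
  by_cases h : ∃ k, s k = j
  · obtain ⟨k, rfl⟩ := h
    simp [hs.extend_apply, Pi.single_apply, hs.eq_iff]
  · rw [ExtendByZero.linearMap_apply, Function.extend_apply' _ _ _ h,
      Pi.single_eq_of_ne (fun hj => h ⟨i, hj.symm⟩), Pi.zero_apply]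

lemma Fin.extend_succAbove_removeNth {α : Type*} [Zero α] {m : ℕ} (p : Fin (m + 1))
    {b : Fin (m + 1) → α} (hb : b p = 0) :
    Function.extend p.succAbove (p.removeNth b) 0 = b := by
  ext j
  obtain rfl | ⟨i, rfl⟩ := Fin.eq_self_or_eq_succAbove p j
  · rw [Function.extend_apply' _ _ _ (by simp), hb, Pi.zero_apply]
  · exact Fin.succAbove_right_injective.extend_apply _ _ _

lemma Fin.image_setOf_ne_eq_range_removeNth {α : Type*} {m : ℕ} (g : Fin (m + 1) → α)
    (p : Fin (m + 1)) : g '' {i | i ≠ p} = Set.range (p.removeNth g) := by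
  change g '' _ = Set.range (g ∘ p.succAbove)
  rw [Set.range_comp, Fin.range_succAbove]
  rfl

lemma Ideal.ofList_cons_ofFn (f : R) {m : ℕ} (x : Fin m → R) :
    Ideal.ofList (f :: List.ofFn x) = Ideal.span ({f} ∪ Set.range x) := by
  unfold Ideal.ofList
  congr 1
  ext r
  simp [List.mem_ofFn, eq_comm]

lemma mem_ofList_of_isWeaklyRegular_append {rs : List R} {r x : R}
    (hreg : IsWeaklyRegular R (rs ++ [r])) (hx : r * x ∈ Ideal.ofList rs) :
    x ∈ Ideal.ofList rs := by
  obtain ⟨-, hr⟩ := (isWeaklyRegular_append_iff R rs [r]).mp hreg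
  rw [isWeaklyRegular_singleton_iff] at hr
  have hI : (Ideal.ofList rs • ⊤ : Submodule R R) = Ideal.ofList rs := by
    rw [smul_eq_mul, Ideal.mul_top]
  rw [← hI] at hx ⊢
  exact mem_of_isSMulRegular_quotient_of_smul_mem hr hx

lemma mul_apply_mem_span_of_dotProduct_mem [Fintype ι] [DecidableEq ι] {f : R} {g a : ι → R}
    (ha : a ⬝ᵥ g ∈ Ideal.span {f}) (p : ι) :
    g p * a p ∈ Ideal.span ({f} ∪ g '' {i | i ≠ p}) := by
  set J := Ideal.span ({f} ∪ g '' {i | i ≠ p})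
  have hfJ : Ideal.span {f} ≤ J := Ideal.span_mono Set.subset_union_left
  have hrest : ∑ i ∈ {p}ᶜ, a i * g i ∈ J := by
    refine Ideal.sum_mem _ fun i hi => J.mul_mem_left _ <|
      Ideal.subset_span (Or.inr ⟨i, ?_, rfl⟩)
    simpa using hi
  have hsplit : a ⬝ᵥ g = a p * g p + ∑ i ∈ {p}ᶜ, a i * g i :=
    Fintype.sum_eq_add_sum_compl p _
  rw [mul_comm, eq_sub_of_add_eq hsplit.symm]
  exact J.sub_mem (hfJ ha) hrest

section TrivialSubmodule

variable [LinearOrder ι] (f : R) (g : ι → R)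

def trivialSubmodule : Submodule R (ι → R) :=
  Submodule.span R ({v | ∃ i, v = Pi.single i f} ∪
    {v | ∃ i j, i < j ∧ v = Pi.single i (g j) - Pi.single j (g i)})

lemma single_mem_trivialSubmodule (i : ι) : Pi.single i f ∈ trivialSubmodule f g :=
  Submodule.subset_span (Or.inl ⟨i, rfl⟩)

lemma single_sub_single_mem_trivialSubmodule (i j : ι) :
    Pi.single i (g j) - Pi.single j (g i) ∈ trivialSubmodule f g := by
  rcases lt_trichotomy i j with h | rfl | h
  · exact Submodule.subset_span (Or.inr ⟨i, j, h, rfl⟩)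
  · simp
  · rw [← neg_sub]
    exact neg_mem (Submodule.subset_span (Or.inr ⟨j, i, h, rfl⟩))

lemma map_proj_trivialSubmodule (p : ι) :
    (trivialSubmodule f g).map (LinearMap.proj p) = Ideal.span ({f} ∪ g '' {i | i ≠ p}) := by
  apply le_antisymm
  · rw [trivialSubmodule, Submodule.map_span_le]
    have hg : ∀ k, k ≠ p → g k ∈ Ideal.span ({f} ∪ g '' {i | i ≠ p}) :=
      fun k hk => Ideal.subset_span (Or.inr ⟨k, hk, rfl⟩)
    rintro v (⟨i, rfl⟩ | ⟨i, j, hij, rfl⟩)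
    · rw [LinearMap.proj_apply, Pi.single_apply]
      split_ifs
      · exact Ideal.subset_span (Or.inl rfl)
      · exact zero_mem _
    · rw [LinearMap.proj_apply, Pi.sub_apply, Pi.single_apply, Pi.single_apply]
      split_ifs with hpi hpj hpj
      · exact absurd (hpi ▸ hpj) hij.ne
      · rw [sub_zero]
        exact hg j (Ne.symm hpj)
      · rw [zero_sub]
        exact neg_mem (hg i (Ne.symm hpi))
      · rw [sub_zero]
        exact zero_mem _
  · refine Submodule.span_le.mpr ?_
    rintro r (hr | ⟨i, hi, rfl⟩)
    · rw [Set.mem_singleton_iff.mp hr]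
      exact ⟨_, single_mem_trivialSubmodule f g p, by simp⟩
    · exact ⟨_, single_sub_single_mem_trivialSubmodule f g p i, by simp [Ne.symm hi]⟩

lemma dotProduct_mem_span_singleton_of_mem_trivialSubmodule [Fintype ι] {a : ι → R}
    (ha : a ∈ trivialSubmodule f g) : a ⬝ᵥ g ∈ Ideal.span {f} := by
  induction ha using Submodule.span_induction with
  | mem v hv =>
    rcases hv with ⟨i, rfl⟩ | ⟨i, j, -, rfl⟩
    · rw [single_dotProduct]
      exact Ideal.mul_mem_right _ _ (Ideal.mem_span_singleton_self f)
    · rw [sub_dotProduct, single_dotProduct, single_dotProduct, mul_comm, sub_self]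
      exact zero_mem _
  | zero => simp
  | add x y _ _ hx hy => rw [add_dotProduct]; exact add_mem hx hy
  | smul r x _ hx => rw [smul_dotProduct, smul_eq_mul]; exact Ideal.mul_mem_left _ r hx

lemma map_extendByZero_trivialSubmodule_le [LinearOrder κ] {s : κ → ι} (hs : s.Injective) :
    (trivialSubmodule f (g ∘ s)).map (Function.ExtendByZero.linearMap R s) ≤
      trivialSubmodule f g := by
  rw [trivialSubmodule, Submodule.map_span_le]
  rintro v (⟨i, rfl⟩ | ⟨i, j, -, rfl⟩)
  · rw [Function.ExtendByZero.linearMap_single hs]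
    exact single_mem_trivialSubmodule f g (s i)
  · rw [map_sub, Function.ExtendByZero.linearMap_single hs,
      Function.ExtendByZero.linearMap_single hs]
    exact single_sub_single_mem_trivialSubmodule f g (s i) (s j)

end TrivialSubmodule

section Elimination

variable {f : R} {m : ℕ} {g : Fin (m + 1) → R}

lemma mem_trivialSubmodule_of_apply_mem (p : Fin (m + 1)) {a : Fin (m + 1) → R}
    (ha : a ⬝ᵥ g ∈ Ideal.span {f}) (hp : a p ∈ Ideal.span ({f} ∪ g '' {i | i ≠ p}))
    (hrest : ∀ b : Fin m → R, b ⬝ᵥ p.removeNth g ∈ Ideal.span {f} →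
      b ∈ trivialSubmodule f (p.removeNth g)) :
    a ∈ trivialSubmodule f g := by
  -- correct `a` by an element of `T` agreeing with it at `p`
  rw [← map_proj_trivialSubmodule] at hp
  obtain ⟨t, ht, htp⟩ := hp
  have hbp : (a - t) p = 0 := by simp [← htp]
  have hb : p.removeNth (a - t) ⬝ᵥ p.removeNth g ∈ Ideal.span {f} := by
    have h := sub_mem ha (dotProduct_mem_span_singleton_of_mem_trivialSubmodule f g ht)
    rwa [← sub_dotProduct, dotProduct, Fin.sum_univ_succAbove _ p, hbp, zero_mul,
      zero_add] at h
  have hext := map_extendByZero_trivialSubmodule_le f g Fin.succAbove_right_injective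
    (Submodule.mem_map_of_mem (hrest _ hb))
  rw [show Function.ExtendByZero.linearMap R p.succAbove (p.removeNth (a - t)) = a - t from
    Fin.extend_succAbove_removeNth p hbp] at hext
  simpa using add_mem hext ht

end Elimination

theorem mem_trivialSubmodule_of_isWeaklyRegular (f : R) {m : ℕ} (x : Fin m → R)
    (hreg : IsWeaklyRegular R (f :: List.ofFn x)) (a : Fin m → R)
    (ha : a ⬝ᵥ x ∈ Ideal.span {f}) : a ∈ trivialSubmodule f x := by
  induction m with
  | zero => simpa only [Subsingleton.elim a 0] using zero_mem _
  | succ m ih =>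
    replace hreg : IsWeaklyRegular R
        ((f :: List.ofFn ((Fin.last m).removeNth x)) ++ [x (Fin.last m)]) := by
      rw [List.ofFn_succ', List.concat_eq_append, ← List.cons_append] at hreg
      rwa [Fin.removeNth_last]
    refine mem_trivialSubmodule_of_apply_mem (Fin.last m) ha ?_ fun b hb => ih _ ?_ b hb
    · have hlast := mul_apply_mem_span_of_dotProduct_mem ha (Fin.last m)
      rw [Fin.image_setOf_ne_eq_range_removeNth, ← Ideal.ofList_cons_ofFn] at hlast ⊢
      exact mem_ofList_of_isWeaklyRegular_append hreg hlast
    · exact (isWeaklyRegular_append_iff R _ _).mp hreg |>.1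

end KoszulRelations

/-- Let `R` be a commutative ring, `n ≥ 2`, and `f, g₁, …, gₙ ∈ R`
(with `g : Fin n → R`, `g ⟨0, _⟩` playing the role of `g₁`).  Assume `f, g₂, …, gₙ` is a
regular sequence on `R`.  Let `a = (a₁, …, aₙ)` be a logarithmic vector, i.e.
`a₁g₁ + ⋯ + aₙgₙ ∈ (f)`.  Then `a` belongs to the trivial submodule `T`
(generated by `f·eᵢ` and `gⱼ·eᵢ − gᵢ·eⱼ`, `i < j`) if and only if
`a₁ ∈ (f, g₂, …, gₙ)`. -/
theorem stmt_2 (R : Type*) [CommRing R] (n : ℕ) (hn : 2 ≤ n) (f : R) (g : Fin n → R)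
    (hreg : RingTheory.Sequence.IsRegular R (f :: ((List.finRange n).drop 1).map g))
    (a : Fin n → R) (hlog : ∑ i, a i * g i ∈ Ideal.span {f}) :
    a ∈ Submodule.span R
        ({v : Fin n → R | ∃ i : Fin n, v = Pi.single i f} ∪
          {v : Fin n → R | ∃ i j : Fin n, i < j ∧
            v = Pi.single i (g j) - Pi.single j (g i)}) ↔
      a ⟨0, by omega⟩ ∈ Ideal.span ({f} ∪ g '' {i | i ≠ ⟨0, by omega⟩}) := by
  obtain ⟨m, rfl⟩ : ∃ m, n = m + 1 := ⟨n - 1, by omega⟩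
  change a ∈ trivialSubmodule f g ↔ a 0 ∈ Ideal.span ({f} ∪ g '' {i | i ≠ 0})
  refine ⟨fun ha => map_proj_trivialSubmodule f g 0 ▸ Submodule.mem_map_of_mem ha,
    fun h0 => ?_⟩
  have htail : ((List.finRange (m + 1)).drop 1).map g = List.ofFn (Fin.removeNth 0 g) := by
    simp [List.finRange_succ, List.ofFn_eq_map, Fin.tail]
  rw [htail] at hreg
  exact mem_trivialSubmodule_of_apply_mem 0 hlog h0
    (mem_trivialSubmodule_of_isWeaklyRegular f _ hreg.toIsWeaklyRegular)
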